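/- arXiv:1311.0655 — 4 statements merged into one kernel-verified Lean document; each statement's English description precedes it below -/
import Mathlib

section
/- Let ρ > 1 be a real number and let z ∈ ℂ with Im(z) ≠ 0. Then ∫_ℝ e^{it}/(t − z)^ρ dt = (2π e^{iπρ/2}/Γ(ρ)) · e^{iz} if Im(z) > 0, and ∫_ℝ e^{it}/(t − z)^ρ dt = 0 if Im(z) < 0. -/
open scoped Real MatrixGroups
open Filter MeasureTheory UpperHalfPlane

noncomputable section

/-- Iterates of the Gauss map: `cfX x n` is the `n`-th complete quotient of `x`. -/
def cfX (x : ℝ) : ℕ → ℝ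
  | 0 => x
  | n+1 => 1 / (cfX x n - ⌊cfX x n⌋)

/-- The partial quotients `a_n` of the continued fraction expansion of `x`. -/
def cfa (x : ℝ) (n : ℕ) : ℤ := ⌊cfX x n⌋

/-- Numerators `p_n` of the continued fraction convergents of `x`. -/
def cfp (x : ℝ) : ℕ → ℤ
  | 0 => cfa x 0
  | 1 => cfa x 1 * cfa x 0 + 1
  | n+2 => cfa x (n+2) * cfp x (n+1) + cfp x n

/-- Denominators `q_n` of the continued fraction convergents of `x`. -/
def cfq (x : ℝ) : ℕ → ℤ
  | 0 => 1
  | 1 => cfa x 1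
  | n+2 => cfa x (n+2) * cfq x (n+1) + cfq x n

/-- `κ_n`, defined by `|x - p_n/q_n| = q_n ^ (-κ_n)`. -/
def kappa (x : ℝ) (n : ℕ) : ℝ :=
  -Real.log |x - (cfp x n : ℝ) / (cfq x n : ℝ)| / Real.log (cfq x n)

/-- `μ(x) = limsup κ_n`, as an extended real number. -/
def mu (x : ℝ) : EReal := Filter.limsup (fun n => ((kappa x n : ℝ) : EReal)) Filter.atTop

/-- `ν(x) = liminf κ_n`, as an extended real number. -/
def nu (x : ℝ) : EReal := Filter.liminf (fun n => ((kappa x n : ℝ) : EReal)) Filter.atTop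

/-- The real inverse of an extended real number, with the convention `1/∞ = 0`. -/
def invE (m : EReal) : ℝ := if m = ⊤ then 0 else 1 / m.toReal

/-- `f ∈ C^α(x₀)`: there are a polynomial `P` of degree at most `⌊α⌋` and a constant `C > 0`
with `|f x - P (x - x₀)| ≤ C * |x - x₀| ^ α` near `x₀`. -/
def HolderAt (f : ℝ → ℝ) (α : ℝ) (x₀ : ℝ) : Prop :=
  ∃ (P : Polynomial ℝ) (C : ℝ), 0 < C ∧ (P.natDegree : ℤ) ≤ ⌊α⌋ ∧
    ∀ᶠ x in nhds x₀, |f x - P.eval (x - x₀)| ≤ C * |x - x₀| ^ α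

/-- The Hölder regularity exponent of `f` at `x₀`. -/
def holderExponent (f : ℝ → ℝ) (x₀ : ℝ) : ℝ :=
  sSup {β : ℝ | 0 < β ∧ HolderAt f β x₀}

/-- The series `M_{k,s}(x) = Σ_{n≥1} (r_n / n^s) sin(2πnx)`. -/
def Mks (r : ℕ → ℝ) (s : ℝ) (x : ℝ) : ℝ :=
  ∑' n : ℕ, r (n+1) / ((n+1 : ℝ)) ^ s * Real.sin (2 * π * (n+1) * x)

/-- The point `b + i a` of the upper half-plane (for `a > 0`). -/
def mkH (b a : ℝ) (ha : 0 < a) : ℍ := ⟨⟨b, a⟩, ha⟩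

/-- The wavelet `ψ_s(t) = (t + i)^{-(s+1)}` (principal branch). -/
def psiW (s : ℝ) (t : ℝ) : ℂ := ((t : ℂ) + Complex.I) ^ (-(s+1) : ℂ)

/-- The wavelet transform `C(a,b)(f) = a⁻¹ ∫ f(t) conj(ψ_s((t-b)/a)) dt`. -/
def waveletT (s : ℝ) (f : ℝ → ℝ) (a b : ℝ) : ℂ :=
  (1/a : ℂ) * ∫ t : ℝ, (f t : ℂ) * (starRingEnd ℂ) (psiW s ((t - b)/a))

/-- The Fourier transform `ĝ(ξ) = ∫ g(x) e^{-ixξ} dx`. -/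
def fourierT (g : ℝ → ℂ) (ξ : ℝ) : ℂ := ∫ x : ℝ, g x * Complex.exp (-(Complex.I * x * ξ))

/-- The sum-of-divisors function `σ₁`. -/
def sigma1 (n : ℕ) : ℕ := ∑ d ∈ n.divisors, d

/-- The constant `Ĉ = (2π)^s ⬝ π e^{iπs/2} / Γ(s+1)`. -/
def Chat (s : ℝ) : ℂ :=
  (((2*π : ℝ) ^ s : ℝ) : ℂ) * ((π : ℂ) * Complex.exp ((π : ℂ) * Complex.I * s / 2) /
    Complex.Gamma ((s : ℂ) + 1))

/-- The series `E_{2,s}(x) = Σ_{n≥1} (σ₁(n)/n^s) sin(2πnx)`. -/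
def E2s (s : ℝ) (x : ℝ) : ℝ :=
  ∑' n : ℕ, (sigma1 (n+1) : ℝ) / ((n+1 : ℝ)) ^ s * Real.sin (2 * π * (n+1) * x)

/-! For `Re w > 0` the one-sided kernel `g(t) = 1_{t > 0} t^(ρ-1) e^(-wt)` has Fourier transform
`Γ(ρ) / (w + 2πiξ)^ρ`: this is Euler's Gamma integral, continued analytically from real to complex
`w`. For `ρ > 1` the transform is integrable, so Fourier inversion recovers `g` at every `v ≠ 0`:
`∫ e^(itv) / (w + it)^ρ dt = 2π g(v) / Γ(ρ)`. Writing `t - z = -i (w + it)` with `w = -iz` when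
`Im z > 0`, and `t - z = i (w - it)` with `w = iz` when `Im z < 0`, the principal powers split
(the arguments add up inside `(-π, π)`), and setting `v = 1`, resp. `v = -1` after `t ↦ -t`, gives
the two cases; at `v = -1` the kernel `g` vanishes. -/

open Complex Set Topology

section GammaIntegral

variable {s w : ℂ}

lemma integrableOn_cpow_mul_cexp_neg_mul_Ioi (hs : 0 < s.re) (hw : 0 < w.re) :
    IntegrableOn (fun t : ℝ => (t : ℂ) ^ (s - 1) * cexp (-(w * t))) (Ioi 0) := by
  have hreal : IntegrableOn (fun t : ℝ => t ^ (s.re - 1) * Real.exp (-w.re * t ^ (1 : ℝ)))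
      (Ioi 0) :=
    integrableOn_rpow_mul_exp_neg_mul_rpow (by linarith) one_pos hw
  refine Integrable.congr' hreal ?_ ?_
  · refine (ContinuousOn.mul (fun t ht => ?_) (by fun_prop)).aestronglyMeasurable
      measurableSet_Ioi
    exact (continuousAt_ofReal_cpow_const _ _ (Or.inr (ne_of_gt ht))).continuousWithinAt
  · filter_upwards [ae_restrict_mem measurableSet_Ioi] with t (ht : 0 < t)
    rw [norm_mul, norm_mul, norm_cpow_eq_rpow_re_of_pos ht, norm_exp,
      Real.norm_of_nonneg (by positivity), Real.norm_of_nonneg (by positivity)]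
    simp [mul_re]

lemma differentiableOn_integral_cpow_mul_cexp_neg_mul_Ioi (hs : 0 < s.re) :
    DifferentiableOn ℂ (fun w : ℂ => ∫ t : ℝ in Ioi 0, (t : ℂ) ^ (s - 1) * cexp (-(w * t)))
      {w | 0 < w.re} := by
  intro w₀ (hw₀ : 0 < w₀.re)
  have hs' : 0 < (s + 1).re := by rw [add_re, one_re]; linarith
  have hderiv_int := integrableOn_cpow_mul_cexp_neg_mul_Ioi hs' hw₀
  have hbound_int := integrableOn_cpow_mul_cexp_neg_mul_Ioi hs'
    (w := ((w₀.re / 2 : ℝ) : ℂ)) (by simpa using hw₀)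
  simp only [add_sub_cancel_right] at hderiv_int hbound_int
  refine (hasDerivAt_integral_of_dominated_loc_of_deriv_le (μ := volume.restrict (Ioi (0 : ℝ)))
    (F := fun (w : ℂ) (t : ℝ) => (t : ℂ) ^ (s - 1) * cexp (-(w * t)))
    (F' := fun (w : ℂ) (t : ℝ) => -((t : ℂ) ^ s * cexp (-(w * t))))
    ((isOpen_lt continuous_const Complex.continuous_re).mem_nhds (half_lt_self hw₀))
    (((isOpen_lt continuous_const Complex.continuous_re).eventually_mem hw₀).mono fun w hw =>
      (integrableOn_cpow_mul_cexp_neg_mul_Ioi hs hw).aestronglyMeasurable)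
    (integrableOn_cpow_mul_cexp_neg_mul_Ioi hs hw₀) hderiv_int.aestronglyMeasurable.neg ?_
    hbound_int.norm ?_).2.differentiableAt.differentiableWithinAt
  · filter_upwards [ae_restrict_mem measurableSet_Ioi] with t (ht : 0 < t) w (hw : _ < w.re)
    rw [norm_neg, norm_mul, norm_mul, norm_exp, norm_exp]
    refine mul_le_mul_of_nonneg_left (Real.exp_le_exp.mpr ?_) (norm_nonneg _)
    simp only [neg_re, mul_re, ofReal_re, ofReal_im, mul_zero, sub_zero, neg_le_neg_iff]
    gcongr
  · filter_upwards [ae_restrict_mem measurableSet_Ioi] with t (ht : 0 < t) w _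
    refine ((hasDerivAt_mul_const (x := w) (t : ℂ)).neg.cexp.const_mul
      ((t : ℂ) ^ (s - 1))).congr_deriv ?_
    have ht' : (t : ℂ) ≠ 0 := ofReal_ne_zero.mpr ht.ne'
    rw [cpow_sub _ _ ht', cpow_one, Pi.neg_apply]
    field_simp

theorem integral_cpow_mul_cexp_neg_mul_Ioi_of_re_pos (hs : 0 < s.re) (hw : 0 < w.re) :
    ∫ t : ℝ in Ioi 0, (t : ℂ) ^ (s - 1) * cexp (-(w * t)) = Gamma s / w ^ s := by
  have hU : IsOpen {w : ℂ | 0 < w.re} := isOpen_lt continuous_const Complex.continuous_re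
  have hrhs : DifferentiableOn ℂ (fun w : ℂ => Gamma s / w ^ s) {w | 0 < w.re} :=
    fun w (hw : 0 < w.re) => (differentiableAt_const _).div
      (differentiableAt_id.cpow_const (Or.inl hw))
      (cpow_ne_zero_iff.mpr (Or.inl (ne_zero_of_re_pos hw))) |>.differentiableWithinAt
  have hofReal : Tendsto ((↑) : ℝ → ℂ) (𝓝[≠] 1) (𝓝[≠] 1) :=
    tendsto_nhdsWithin_iff.mpr ⟨tendsto_nhdsWithin_of_tendsto_nhds continuous_ofReal.continuousAt,
      eventually_nhdsWithin_of_forall fun r hr => ofReal_ne_one.mpr hr⟩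
  refine (differentiableOn_integral_cpow_mul_cexp_neg_mul_Ioi hs).analyticOnNhd hU
    |>.eqOn_of_preconnected_of_frequently_eq (hrhs.analyticOnNhd hU)
      (convex_halfSpace_re_gt 0).isPreconnected (z₀ := 1) (by simp)
      (hofReal.frequently (eventually_nhdsWithin_of_eventually_nhds
        ((eventually_gt_nhds one_pos).mono fun r (hr : 0 < r) => ?_)).frequently) hw
  rw [integral_cpow_mul_exp_neg_mul_Ioi hs hr, one_div, inv_cpow_ofReal_nonneg hr.le,
    div_eq_inv_mul]

end GammaIntegral

def gammaKernel (s w : ℂ) : ℝ → ℂ :=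
  (Ioi 0).indicator fun t => (t : ℂ) ^ (s - 1) * cexp (-(w * t))

section FourierTransform

open FourierTransform Asymptotics

variable {s w : ℂ} {ρ : ℝ}

lemma integrable_gammaKernel (hs : 0 < s.re) (hw : 0 < w.re) : Integrable (gammaKernel s w) :=
  (integrableOn_cpow_mul_cexp_neg_mul_Ioi hs hw).integrable_indicator measurableSet_Ioi

lemma continuousAt_gammaKernel {v : ℝ} (hv : v ≠ 0) : ContinuousAt (gammaKernel s w) v := by
  rcases hv.lt_or_gt with hv | hv
  · refine continuousAt_const.congr (eqOn_indicator'.eventuallyEq_of_mem ?_).symm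
    exact mem_of_superset (Iio_mem_nhds hv) fun t (ht : t < 0) => not_lt.mpr ht.le
  · refine ContinuousAt.congr ?_ (eqOn_indicator.eventuallyEq_of_mem (Ioi_mem_nhds hv)).symm
    exact (continuousAt_ofReal_cpow_const _ _ (Or.inr hv.ne')).mul (by fun_prop)

lemma fourier_gammaKernel (hs : 0 < s.re) (hw : 0 < w.re) (ξ : ℝ) :
    𝓕 (gammaKernel s w) ξ = Gamma s / (w + 2 * π * ξ * Complex.I) ^ s := by
  rw [Real.fourier_real_eq_integral_exp_smul,
    ← integral_cpow_mul_cexp_neg_mul_Ioi_of_re_pos hs (w := w + 2 * π * ξ * Complex.I)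
      (by simpa using hw), ← integral_indicator measurableSet_Ioi]
  congr 1 with t
  rw [gammaKernel, ← indicator_smul_apply _ fun t : ℝ => cexp (↑(-2 * π * t * ξ) * Complex.I)]
  congr 1 with t
  rw [smul_eq_mul, mul_left_comm, ← Complex.exp_add]
  congr 2
  push_cast
  ring

lemma integrable_inv_cpow_add_mul_I (hρ : 1 < ρ) (hw : 0 < w.re) :
    Integrable fun ξ : ℝ => ((w + ξ * Complex.I) ^ (ρ : ℂ))⁻¹ := by
  have hslit (ξ : ℝ) : w + ξ * Complex.I ∈ slitPlane := Or.inl (by simpa using hw)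
  have hcont : Continuous fun ξ : ℝ => ((w + ξ * Complex.I) ^ (ρ : ℂ))⁻¹ :=
    continuous_iff_continuousAt.mpr fun ξ =>
      (ContinuousAt.cpow (f := fun ξ : ℝ => w + ξ * Complex.I) (by fun_prop) continuousAt_const
        (hslit ξ)).inv₀
        (cpow_ne_zero_iff.mpr (Or.inl (slitPlane_ne_zero (hslit ξ))))
  refine hcont.locallyIntegrable.integrable_of_isBigO_cocompact ?_
    ((integrable_one_add_norm (by simpa using hρ)).integrableAtFilter _)
  refine IsBigO.of_bound (2 ^ ρ) ?_
  filter_upwards [tendsto_norm_cocompact_atTop.eventually_ge_atTop (2 * ‖w‖ + 1)] with ξ hξ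
  have hlow : 1 + ‖ξ‖ ≤ 2 * ‖w + ξ * Complex.I‖ := by
    have : ‖(ξ : ℂ) * Complex.I‖ ≤ ‖w + ξ * Complex.I‖ + ‖w‖ := by
      simpa using norm_sub_le (w + ξ * Complex.I) w
    rw [norm_mul, norm_I, mul_one, norm_real] at this
    linarith
  rw [norm_inv, norm_cpow_real, Real.norm_of_nonneg (by positivity)]
  calc (‖w + ξ * Complex.I‖ ^ ρ)⁻¹ = 2 ^ ρ * (2 * ‖w + ξ * Complex.I‖) ^ (-ρ) := by
        rw [Real.mul_rpow zero_le_two (norm_nonneg _), Real.rpow_neg zero_le_two,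
          Real.rpow_neg (norm_nonneg _)]
        field_simp
    _ ≤ 2 ^ ρ * (1 + ‖ξ‖) ^ (-ρ) := by
        refine mul_le_mul_of_nonneg_left ?_ (by positivity)
        exact Real.rpow_le_rpow_of_nonpos (by positivity) hlow (by linarith)

lemma integrable_fourier_gammaKernel (hρ : 1 < ρ) (hw : 0 < w.re) :
    Integrable (𝓕 (gammaKernel ρ w)) := by
  have hρ' : 0 < (ρ : ℂ).re := by rw [ofReal_re]; linarith
  refine (((integrable_inv_cpow_add_mul_I hρ hw).comp_mul_left' Real.two_pi_pos.ne').const_mul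
    (Gamma ρ)).congr (Eventually.of_forall fun ξ => ?_)
  rw [fourier_gammaKernel hρ' hw, div_eq_mul_inv]
  push_cast
  ring_nf

theorem integral_cexp_mul_div_cpow (hρ : 1 < ρ) (hw : 0 < w.re) {v : ℝ} (hv : v ≠ 0) :
    ∫ t : ℝ, cexp (Complex.I * t * v) / (w + t * Complex.I) ^ (ρ : ℂ) =
      2 * π / Gamma ρ * gammaKernel ρ w v := by
  have hρ' : 0 < (ρ : ℂ).re := by rw [ofReal_re]; linarith
  have hΓ : Gamma ρ ≠ 0 := Gamma_ne_zero_of_re_pos hρ'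
  set F : ℝ → ℂ := fun t => cexp (Complex.I * t * v) / (w + t * Complex.I) ^ (ρ : ℂ)
  have hscale : ∫ t, F t = 2 * π * ∫ ξ, F (2 * π * ξ) := by
    rw [Measure.integral_comp_mul_left, abs_inv, abs_of_pos Real.two_pi_pos, real_smul, ← mul_assoc]
    push_cast
    field_simp
  rw [hscale, ← (integrable_gammaKernel hρ' hw).fourierInv_fourier_eq
    (integrable_fourier_gammaKernel hρ hw) (continuousAt_gammaKernel hv), Real.fourierInv_eq',
    ← integral_const_mul, ← integral_const_mul]
  congr 1 with ξ
  rw [fourier_gammaKernel hρ' hw]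
  simp only [ofReal_mul, ofReal_ofNat, RCLike.inner_apply, Real.ringHom_apply, smul_eq_mul, F]
  field_simp

end FourierTransform

lemma mul_cpow_of_re_nonneg_of_re_pos {x y : ℂ} (hx : 0 ≤ x.re) (hx₀ : x ≠ 0) (hy : 0 < y.re)
    (c : ℂ) : (x * y) ^ c = x ^ c * y ^ c := by
  have hy₀ : y ≠ 0 := ne_zero_of_re_pos hy
  have hargx := abs_le.mp (abs_arg_le_pi_div_two_iff.mpr hx)
  have hargy := abs_lt.mp (abs_arg_lt_pi_div_two_iff.mpr (Or.inl hy))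
  rw [cpow_def_of_ne_zero (mul_ne_zero hx₀ hy₀), cpow_def_of_ne_zero hx₀, cpow_def_of_ne_zero hy₀,
    log_mul hx₀ hy₀ ⟨by linarith, by linarith⟩, add_mul, Complex.exp_add]

lemma neg_I_cpow (c : ℂ) : (-Complex.I) ^ c = cexp (-(π * Complex.I * c / 2)) := by
  rw [cpow_def_of_ne_zero (neg_ne_zero.mpr I_ne_zero), log_neg_I]
  ring_nf

section HalfPlanes

variable {ρ : ℝ} {z : ℂ}

theorem integral_cexp_div_sub_cpow_of_im_pos (hρ : 1 < ρ) (hz : 0 < z.im) :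
    ∫ t : ℝ, cexp (Complex.I * t) / ((t : ℂ) - z) ^ (ρ : ℂ) =
      2 * π * cexp (π * Complex.I * ρ / 2) / Gamma ρ * cexp (Complex.I * z) := by
  have hw : 0 < (-(Complex.I * z)).re := by simpa using hz
  have hsplit (t : ℝ) : ((t : ℂ) - z) ^ (ρ : ℂ) =
      (-Complex.I) ^ (ρ : ℂ) * (-(Complex.I * z) + t * Complex.I) ^ (ρ : ℂ) := by
    rw [← mul_cpow_of_re_nonneg_of_re_pos (by simp) (neg_ne_zero.mpr I_ne_zero) (by simpa using hz)]
    congr 1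
    linear_combination ((t : ℂ) - z) * I_sq
  simp_rw [hsplit, div_mul_eq_div_div_swap, div_eq_mul_inv _ ((-Complex.I) ^ (ρ : ℂ))]
  have h := integral_cexp_mul_div_cpow hρ hw one_ne_zero
  simp only [ofReal_one, mul_one] at h
  rw [integral_mul_const, h, gammaKernel, indicator_of_mem (mem_Ioi.mpr one_pos), ofReal_one,
    one_cpow, one_mul, neg_I_cpow, ← Complex.exp_neg, neg_neg, mul_one, neg_neg]
  ring

theorem integral_cexp_div_sub_cpow_of_im_neg (hρ : 1 < ρ) (hz : z.im < 0) :
    ∫ t : ℝ, cexp (Complex.I * t) / ((t : ℂ) - z) ^ (ρ : ℂ) = 0 := by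
  have hw : 0 < (Complex.I * z).re := by simpa using hz
  have hsplit (t : ℝ) : cexp (Complex.I * t) / ((t : ℂ) - z) ^ (ρ : ℂ) =
      (Complex.I ^ (ρ : ℂ))⁻¹ * (cexp (Complex.I * ↑(-t) * ↑(-1 : ℝ)) /
        (Complex.I * z + ↑(-t) * Complex.I) ^ (ρ : ℂ)) := by
    have hre : 0 < (Complex.I * z + ↑(-t) * Complex.I).re := by simpa using hz
    rw [show (t : ℂ) - z = Complex.I * (Complex.I * z + ↑(-t) * Complex.I) by
      push_cast; linear_combination ((t : ℂ) - z) * I_sq,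
      mul_cpow_of_re_nonneg_of_re_pos (by simp) I_ne_zero hre]
    push_cast
    ring_nf
  simp_rw [hsplit]
  rw [integral_const_mul, integral_neg_eq_self (fun t : ℝ => cexp (Complex.I * t * ↑(-1 : ℝ)) /
    (Complex.I * z + t * Complex.I) ^ (ρ : ℂ)), integral_cexp_mul_div_cpow hρ hw (by norm_num),
    gammaKernel, indicator_of_notMem (by norm_num), mul_zero, mul_zero]

end HalfPlanes

theorem integral_exp_div_pow_general (ρ : ℝ) (hρ : 1 < ρ) (z : ℂ) :
    (0 < z.im → ∫ t : ℝ, Complex.exp (Complex.I * t) / ((t : ℂ) - z) ^ (ρ : ℂ) =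
      2 * (π : ℂ) * Complex.exp ((π : ℂ) * Complex.I * (ρ : ℂ) / 2) / Complex.Gamma (ρ : ℂ) *
        Complex.exp (Complex.I * z)) ∧
    (z.im < 0 → ∫ t : ℝ, Complex.exp (Complex.I * t) / ((t : ℂ) - z) ^ (ρ : ℂ) = 0) :=
  ⟨integral_cexp_div_sub_cpow_of_im_pos hρ, integral_cexp_div_sub_cpow_of_im_neg hρ⟩

theorem integral_exp_div_pow (ρ : ℝ) (hρ : 1 < ρ) (z : ℂ) (hz : z.im ≠ 0) :
    (0 < z.im → ∫ t : ℝ, Complex.exp (Complex.I * t) / ((t : ℂ) - z) ^ (ρ : ℂ) =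
      2 * (π : ℂ) * Complex.exp ((π : ℂ) * Complex.I * (ρ : ℂ) / 2) / Complex.Gamma (ρ : ℂ) *
        Complex.exp (Complex.I * z)) ∧
    (z.im < 0 → ∫ t : ℝ, Complex.exp (Complex.I * t) / ((t : ℂ) - z) ^ (ρ : ℂ) = 0) :=
  integral_exp_div_pow_general ρ hρ z
end
end

section
/- Let s > 1 be a real number. Then for every natural number n with n < s, ∫_ℝ x^n/(x + i)^{s+1} dx = 0. -/
open scoped Real MatrixGroups
open Filter MeasureTheory UpperHalfPlane

noncomputable section

/-!
Writing `x = (x + i) - i` and expanding binomially, `x ^ n (x + i) ^ (-w)` becomes a combination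
of the functions `(x + i) ^ (k - w)` with `k ≤ n`. When `n + 1 < Re w` each of these is
integrable and is the derivative of `(x + i) ^ (k - w + 1) / (k - w + 1)`, which tends to `0` at
both ends of the real line; so every term integrates to `0`.
-/

namespace Complex

open scoped Topology

lemma ofReal_add_I_mem_slitPlane (x : ℝ) : (x : ℂ) + I ∈ slitPlane :=
  Or.inr (by simp)

lemma ofReal_add_I_ne_zero (x : ℝ) : (x : ℂ) + I ≠ 0 :=
  slitPlane_ne_zero (ofReal_add_I_mem_slitPlane x)

lemma norm_ofReal_add_I_cpow_le (x : ℝ) (w : ℂ) :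
    ‖((x : ℂ) + I) ^ w‖ ≤ Real.exp (π * |w.im|) * (1 + ‖x‖ ^ 2) ^ (w.re / 2) := by
  have hnorm : ‖(x : ℂ) + I‖ ^ w.re = (1 + ‖x‖ ^ 2) ^ (w.re / 2) := by
    rw [show (x : ℂ) + I = x + (1 : ℝ) * I by simp, norm_add_mul_I,
      Real.rpow_div_two_eq_sqrt _ (by positivity), Real.norm_eq_abs, sq_abs]
    ring_nf
  have harg : -(π * |w.im|) ≤ arg ((x : ℂ) + I) * w.im :=
    calc -(π * |w.im|) ≤ -|arg ((x : ℂ) + I) * w.im| := by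
          rw [abs_mul]; gcongr; exact abs_arg_le_pi _
      _ ≤ arg ((x : ℂ) + I) * w.im := neg_abs_le _
  calc ‖((x : ℂ) + I) ^ w‖ ≤ ‖(x : ℂ) + I‖ ^ w.re / Real.exp (arg ((x : ℂ) + I) * w.im) :=
        norm_cpow_le _ _
    _ ≤ ‖(x : ℂ) + I‖ ^ w.re / Real.exp (-(π * |w.im|)) := by gcongr
    _ = Real.exp (π * |w.im|) * (1 + ‖x‖ ^ 2) ^ (w.re / 2) := by
        rw [hnorm, Real.exp_neg, div_inv_eq_mul, mul_comm]

lemma continuous_ofReal_add_I_cpow (w : ℂ) : Continuous fun x : ℝ => ((x : ℂ) + I) ^ w :=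
  (continuous_ofReal.add continuous_const).cpow continuous_const ofReal_add_I_mem_slitPlane

lemma integrable_ofReal_add_I_cpow_neg {w : ℂ} (hw : 1 < w.re) :
    Integrable fun x : ℝ => ((x : ℂ) + I) ^ (-w) := by
  have hbound : Integrable fun x : ℝ => Real.exp (π * |w.im|) * (1 + ‖x‖ ^ 2) ^ (-w.re / 2) :=
    (integrable_rpow_neg_one_add_norm_sq (E := ℝ) (r := w.re) (by simpa using hw)).const_mul _
  exact hbound.mono' (continuous_ofReal_add_I_cpow _).aestronglyMeasurable
    (.of_forall fun x => (norm_ofReal_add_I_cpow_le x (-w)).trans_eq (by simp [neg_div]))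

lemma tendsto_ofReal_add_I_cpow_cocompact {v : ℂ} (hv : v.re < 0) :
    Tendsto (fun x : ℝ => ((x : ℂ) + I) ^ v) (cocompact ℝ) (𝓝 0) := by
  refine squeeze_zero_norm (fun x => norm_ofReal_add_I_cpow_le x v) ?_
  have hbase : Tendsto (fun x : ℝ => 1 + ‖x‖ ^ 2) (cocompact ℝ) atTop :=
    tendsto_atTop_add_const_left _ _ <| (tendsto_pow_atTop two_ne_zero).comp
      tendsto_norm_cocompact_atTop
  simpa using ((tendsto_rpow_neg_atTop (y := -(v.re / 2)) (by linarith)).comp hbase).const_mul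
    (Real.exp (π * |v.im|))

lemma hasDerivAt_ofReal_add_I_cpow (v : ℂ) (x : ℝ) :
    HasDerivAt (fun x : ℝ => ((x : ℂ) + I) ^ v) (v * ((x : ℂ) + I) ^ (v - 1)) x := by
  simpa using (((hasDerivAt_id (x : ℂ)).add_const I).cpow_const
    (ofReal_add_I_mem_slitPlane x)).comp_ofReal

lemma integral_ofReal_add_I_cpow_neg {w : ℂ} (hw : 1 < w.re) :
    ∫ x : ℝ, ((x : ℂ) + I) ^ (-w) = 0 := by
  have hv : (1 - w).re < 0 := by rw [sub_re, one_re]; linarith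
  have hv0 : 1 - w ≠ 0 := fun h => by simp [h] at hv
  have hderiv (x : ℝ) : HasDerivAt (fun x : ℝ => ((x : ℂ) + I) ^ (1 - w) / (1 - w))
      (((x : ℂ) + I) ^ (-w)) x := by
    refine ((hasDerivAt_ofReal_add_I_cpow (1 - w) x).div_const (1 - w)).congr_deriv ?_
    rw [mul_div_right_comm, div_self hv0, one_mul, sub_sub_cancel_left]
  have hlim := (tendsto_ofReal_add_I_cpow_cocompact hv).div_const (1 - w)
  rw [zero_div] at hlim
  simpa using integral_of_hasDerivAt_of_tendsto hderiv (integrable_ofReal_add_I_cpow_neg hw)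
    (hlim.mono_left atBot_le_cocompact) (hlim.mono_left atTop_le_cocompact)

lemma ofReal_pow_mul_ofReal_add_I_cpow_neg (n : ℕ) (w : ℂ) (x : ℝ) :
    (x : ℂ) ^ n * ((x : ℂ) + I) ^ (-w) = ∑ k ∈ Finset.range (n + 1),
      (n.choose k * (-I) ^ (n - k)) * ((x : ℂ) + I) ^ (-(w - k)) := by
  rw [show (x : ℂ) ^ n = ((x : ℂ) + I + -I) ^ n by ring, add_pow, Finset.sum_mul]
  refine Finset.sum_congr rfl fun k _ => ?_
  rw [neg_sub, sub_eq_add_neg, cpow_add _ _ (ofReal_add_I_ne_zero x), cpow_natCast]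
  ring

theorem integral_ofReal_pow_mul_ofReal_add_I_cpow_neg {n : ℕ} {w : ℂ} (h : n + 1 < w.re) :
    ∫ x : ℝ, (x : ℂ) ^ n * ((x : ℂ) + I) ^ (-w) = 0 := by
  have hre : ∀ k ∈ Finset.range (n + 1), 1 < (w - k).re := fun k hk => by
    have : (k : ℝ) ≤ n := by exact_mod_cast Finset.mem_range_succ_iff.mp hk
    rw [sub_re, natCast_re]; linarith
  simp_rw [ofReal_pow_mul_ofReal_add_I_cpow_neg n w]
  rw [integral_finsetSum _ fun k hk => (integrable_ofReal_add_I_cpow_neg (hre k hk)).const_mul _]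
  exact Finset.sum_eq_zero fun k hk => by
    rw [integral_const_mul, integral_ofReal_add_I_cpow_neg (hre k hk), mul_zero]

end Complex

theorem vanishing_moments_psiW_general (s : ℝ) :
    ∀ n : ℕ, (n : ℝ) < s →
      ∫ x : ℝ, (x : ℂ) ^ n / ((x : ℂ) + Complex.I) ^ ((s : ℂ) + 1) = 0 := by
  intro n hn
  simp_rw [div_eq_mul_inv, ← Complex.cpow_neg]
  exact Complex.integral_ofReal_pow_mul_ofReal_add_I_cpow_neg (by simpa using hn)

theorem vanishing_moments_psiW (s : ℝ) (hs : 1 < s) :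
    ∀ n : ℕ, (n : ℝ) < s →
      ∫ x : ℝ, (x : ℂ) ^ n / ((x : ℂ) + Complex.I) ^ ((s : ℂ) + 1) = 0 :=
  vanishing_moments_psiW_general s
end
end

section
/- Let s > 0 be a real number and let ψ_s(x) = (x + i)^{−(s+1)}. Then the Fourier transform ψ̂_s(ξ) = 0 for all ξ < 0. -/
open scoped Real MatrixGroups
open Filter MeasureTheory UpperHalfPlane

noncomputable section

/-! For `ξ < 0` the integrand `(x + i)^(-(s+1)) e^(-ixξ)` is `e^(-ξ) f(x + i)`, where
`f(z) = z^(-(s+1)) e^(-izξ)` is holomorphic on the upper half-plane and satisfies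
`|f(x + iy)| ≤ C (1 + |x|)^(-(s+1)) e^(yξ)` for `y ≥ 1/2`.
The `y`-derivative of `∫ f(x + iy) dx` is `i ∫ f'(x + iy) dx`, the integral of an `x`-derivative,
hence zero: the integral does not depend on `y`. Letting `y → ∞` it is `O(e^(yξ)) → 0`. -/

open scoped Topology

lemma integrable_one_add_abs_rpow_neg {r : ℝ} (hr : 1 < r) :
    Integrable fun x : ℝ => (1 + |x|) ^ (-r) := by
  simpa using integrable_one_add_norm (E := ℝ) (μ := volume) (r := r) (by simpa using hr)

namespace Complex

section HorizontalLines

variable {f : ℂ → ℂ} {U : Set ℝ}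

lemma continuous_comp_add_mul_I {h : ℂ → ℂ} (hh : ContinuousOn h (im ⁻¹' U)) {y : ℝ}
    (hy : y ∈ U) : Continuous fun x : ℝ => h (x + y * I) :=
  hh.comp_continuous (by fun_prop) fun x => by simpa using hy

lemma _root_.HasDerivAt.comp_add_const_mul_I {f' : ℂ} {x y : ℝ}
    (hf : HasDerivAt f f' (x + y * I)) :
    HasDerivAt (fun x : ℝ => f (x + y * I)) f' x :=
  (hf.comp_add_const (x : ℂ) (y * I)).comp_ofReal

lemma _root_.HasDerivAt.comp_const_add_mul_I {f' : ℂ} {x y : ℝ}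
    (hf : HasDerivAt f f' (x + y * I)) :
    HasDerivAt (fun y : ℝ => f (x + y * I)) (I * f') y := by
  have := hf.comp (y : ℂ) (((hasDerivAt_id (y : ℂ)).mul_const I).const_add (x : ℂ))
  simpa [mul_comm] using this.comp_ofReal

variable {g : ℝ → ℝ}

lemma hasDerivAt_integral_add_mul_I (hU : IsOpen U) (hf : DifferentiableOn ℂ f (im ⁻¹' U))
    (hg : Integrable g) (hfg : ∀ y ∈ U, ∀ x : ℝ, ‖f (x + y * I)‖ ≤ g x)
    (hf'g : ∀ y ∈ U, ∀ x : ℝ, ‖deriv f (x + y * I)‖ ≤ g x) {y₀ : ℝ} (hy₀ : y₀ ∈ U) :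
    HasDerivAt (fun y : ℝ => ∫ x : ℝ, f (x + y * I)) (I * ∫ x : ℝ, deriv f (x + y₀ * I)) y₀ := by
  have hV : IsOpen (im ⁻¹' U) := hU.preimage continuous_im
  have hfc (y) (hy : y ∈ U) := continuous_comp_add_mul_I hf.continuousOn hy
  have hf'c (y) (hy : y ∈ U) := continuous_comp_add_mul_I (hf.deriv hV).continuousOn hy
  rw [← integral_const_mul]
  refine (hasDerivAt_integral_of_dominated_loc_of_deriv_le
    (F' := fun y x => I * deriv f (x + y * I)) (hU.mem_nhds hy₀)
    (eventually_of_mem (hU.mem_nhds hy₀) fun y hy => (hfc y hy).aestronglyMeasurable)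
    (hg.mono' (hfc y₀ hy₀).aestronglyMeasurable (.of_forall (hfg y₀ hy₀)))
    (continuous_const.mul (hf'c y₀ hy₀)).aestronglyMeasurable
    (.of_forall fun x y hy => ?_) hg (.of_forall fun x y hy => ?_)).2
  · simpa using hf'g y hy x
  · exact (hf.differentiableAt (hV.mem_nhds (by simpa using hy))).hasDerivAt.comp_const_add_mul_I

theorem integral_add_mul_I_eq (hU : IsOpen U) (hU' : IsPreconnected U)
    (hf : DifferentiableOn ℂ f (im ⁻¹' U))
    (hg : Integrable g) (hfg : ∀ y ∈ U, ∀ x : ℝ, ‖f (x + y * I)‖ ≤ g x)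
    (hf'g : ∀ y ∈ U, ∀ x : ℝ, ‖deriv f (x + y * I)‖ ≤ g x) {y₁ y₂ : ℝ} (hy₁ : y₁ ∈ U)
    (hy₂ : y₂ ∈ U) : ∫ x : ℝ, f (x + y₁ * I) = ∫ x : ℝ, f (x + y₂ * I) := by
  have hV : IsOpen (im ⁻¹' U) := hU.preimage continuous_im
  have hderiv (y) (hy : y ∈ U) := hasDerivAt_integral_add_mul_I hU hf hg hfg hf'g hy
  refine hU.is_const_of_deriv_eq_zero hU'
    (fun y hy => (hderiv y hy).differentiableAt.differentiableWithinAt) (fun y hy => ?_) hy₁ hy₂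
  have hint (h : ℂ → ℂ) (hh : ContinuousOn h (im ⁻¹' U)) (hhg : ∀ x : ℝ, ‖h (x + y * I)‖ ≤ g x) :
      Integrable fun x : ℝ => h (x + y * I) :=
    hg.mono' (continuous_comp_add_mul_I hh hy).aestronglyMeasurable (.of_forall hhg)
  rw [(hderiv y hy).deriv, integral_eq_zero_of_hasDerivAt_of_integrable (fun x => ?_)
    (hint _ (hf.deriv hV).continuousOn (hf'g y hy)) (hint _ hf.continuousOn (hfg y hy)), mul_zero,
    Pi.zero_apply]
  exact (hf.differentiableAt (hV.mem_nhds (by simpa using hy))).hasDerivAt.comp_add_const_mul_I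

end HorizontalLines

def powFourierIntegrand (r ξ : ℝ) (z : ℂ) : ℂ := z ^ (-(r : ℂ)) * cexp (-(I * z * ξ))

section PowFourierIntegrand

variable {r ξ : ℝ}

lemma one_add_abs_le_three_mul_norm {x y : ℝ} (hy : 1 / 2 ≤ y) :
    1 + |x| ≤ 3 * ‖(x : ℂ) + y * I‖ := by
  have hre : |x| ≤ ‖(x : ℂ) + y * I‖ := by simpa using abs_re_le_norm ((x : ℂ) + y * I)
  have him : y ≤ ‖(x : ℂ) + y * I‖ := by simpa using im_le_norm ((x : ℂ) + y * I)
  linarith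

lemma norm_powFourierIntegrand (r ξ : ℝ) (z : ℂ) :
    ‖powFourierIntegrand r ξ z‖ = ‖z‖ ^ (-r) * Real.exp (z.im * ξ) := by
  rw [powFourierIntegrand, norm_mul, ← ofReal_neg, norm_cpow_real, norm_exp]
  simp

lemma norm_powFourierIntegrand_le (hr : 0 ≤ r) {y : ℝ} (hy : 1 / 2 ≤ y) (x : ℝ) :
    ‖powFourierIntegrand r ξ (x + y * I)‖ ≤ 3 ^ r * (1 + |x|) ^ (-r) * Real.exp (y * ξ) := by
  have hnorm : ‖(x : ℂ) + y * I‖ ^ (-r) ≤ ((1 + |x|) / 3) ^ (-r) :=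
    Real.rpow_le_rpow_of_nonpos (by positivity)
      (by linarith [one_add_abs_le_three_mul_norm (x := x) hy]) (neg_nonpos.mpr hr)
  rw [Real.div_rpow (by positivity) (by norm_num), Real.rpow_neg (by norm_num : (0:ℝ) ≤ 3),
    div_inv_eq_mul, mul_comm ((1 + |x|) ^ (-r))] at hnorm
  rw [norm_powFourierIntegrand, add_im, ofReal_im, mul_I_im, ofReal_re, zero_add]
  exact mul_le_mul_of_nonneg_right hnorm (Real.exp_pos (y * ξ)).le

lemma hasDerivAt_powFourierIntegrand {z : ℂ} (hz : z ∈ slitPlane) :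
    HasDerivAt (powFourierIntegrand r ξ) (-(r * z⁻¹ + I * ξ) * powFourierIntegrand r ξ z) z := by
  have hz0 : z ≠ 0 := slitPlane_ne_zero hz
  have hexp : HasDerivAt (fun w : ℂ => cexp (-(I * w * ξ))) (cexp (-(I * z * ξ)) * -(I * ξ)) z := by
    simpa using (((hasDerivAt_id z).const_mul I).mul_const (ξ : ℂ)).neg.cexp
  have hpow : HasDerivAt (fun w : ℂ => w ^ (-(r : ℂ))) (-(r : ℂ) * z ^ (-(r : ℂ) - 1)) z := by
    simpa using (hasDerivAt_id z).cpow_const (c := -(r : ℂ)) hz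
  refine (hpow.mul hexp).congr_deriv ?_
  simp only [powFourierIntegrand, cpow_sub _ _ hz0, cpow_one]
  field_simp
  ring

lemma norm_powFourierIntegrand_le_of_nonpos (hr : 0 ≤ r) (hξ : ξ ≤ 0) {y : ℝ} (hy : 1 / 2 ≤ y)
    (x : ℝ) : ‖powFourierIntegrand r ξ (x + y * I)‖ ≤ 3 ^ r * (1 + |x|) ^ (-r) :=
  (norm_powFourierIntegrand_le hr hy x).trans <| mul_le_of_le_one_right (by positivity) <|
    Real.exp_le_one_iff.mpr (mul_nonpos_of_nonneg_of_nonpos (by linarith) hξ)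

lemma norm_deriv_powFourierIntegrand_le (hr : 0 ≤ r) (hξ : ξ ≤ 0) {y : ℝ} (hy : 1 / 2 ≤ y)
    (x : ℝ) : ‖deriv (powFourierIntegrand r ξ) (x + y * I)‖ ≤
      (2 * r + |ξ|) * (3 ^ r * (1 + |x|) ^ (-r)) := by
  set z : ℂ := x + y * I
  have hz : 1 / 2 ≤ ‖z‖ := hy.trans (by simpa [z] using im_le_norm z)
  have hinv : ‖z‖⁻¹ ≤ 2 := by rw [inv_le_comm₀ (by linarith) two_pos]; linarith
  have hfactor : ‖r * z⁻¹ + I * ξ‖ ≤ 2 * r + |ξ| :=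
    calc ‖r * z⁻¹ + I * ξ‖ ≤ r * ‖z‖⁻¹ + |ξ| := by
          simpa [abs_of_nonneg hr] using norm_add_le (r * z⁻¹) (I * ξ)
      _ ≤ 2 * r + |ξ| := by nlinarith
  have hslit : z ∈ slitPlane := mem_slitPlane_iff.mpr (Or.inr (by simp [z]; linarith))
  rw [(hasDerivAt_powFourierIntegrand hslit).deriv, norm_mul, norm_neg]
  exact mul_le_mul hfactor (norm_powFourierIntegrand_le_of_nonpos hr hξ hy x) (norm_nonneg _)
    (by positivity)

lemma integral_powFourierIntegrand_eq (hr : 1 < r) (hξ : ξ ≤ 0) {y₁ y₂ : ℝ} (hy₁ : 1 / 2 < y₁)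
    (hy₂ : 1 / 2 < y₂) :
    ∫ x : ℝ, powFourierIntegrand r ξ (x + y₁ * I) =
      ∫ x : ℝ, powFourierIntegrand r ξ (x + y₂ * I) := by
  have hdiff : DifferentiableOn ℂ (powFourierIntegrand r ξ) (im ⁻¹' Set.Ioi (1 / 2)) :=
    fun z hz => (hasDerivAt_powFourierIntegrand (mem_slitPlane_iff.mpr
      (Or.inr (by simp only [Set.mem_preimage, Set.mem_Ioi] at hz; linarith)))).differentiableAt
      |>.differentiableWithinAt
  have hC : 1 ≤ 2 * r + |ξ| + 1 := by linarith [abs_nonneg ξ]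
  refine integral_add_mul_I_eq (g := fun x => (2 * r + |ξ| + 1) * (3 ^ r * (1 + |x|) ^ (-r)))
    isOpen_Ioi isPreconnected_Ioi hdiff
    ((integrable_one_add_abs_rpow_neg hr).const_mul _ |>.const_mul _) (fun y hy x => ?_)
    (fun y hy x => ?_) hy₁ hy₂
  · exact (norm_powFourierIntegrand_le_of_nonpos (by linarith) hξ (le_of_lt hy) x).trans
      (le_mul_of_one_le_left (by positivity) hC)
  · exact (norm_deriv_powFourierIntegrand_le (by linarith) hξ (le_of_lt hy) x).trans
      (mul_le_mul_of_nonneg_right (by linarith) (by positivity))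

lemma tendsto_integral_powFourierIntegrand_atTop (hr : 1 < r) (hξ : ξ < 0) :
    Tendsto (fun y : ℝ => ∫ x : ℝ, powFourierIntegrand r ξ (x + y * I)) atTop (𝓝 0) := by
  have hint := (integrable_one_add_abs_rpow_neg hr).const_mul (3 ^ r)
  refine squeeze_zero_norm' (eventually_ge_atTop (1 / 2) |>.mono fun y hy => ?_)
    (by simpa using ((Real.tendsto_exp_atBot.comp (tendsto_id.atTop_mul_const_of_neg hξ)).const_mul
      (∫ x : ℝ, 3 ^ r * (1 + |x|) ^ (-r))))
  rw [← integral_mul_const]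
  exact norm_integral_le_of_norm_le (hint.mul_const _)
    (.of_forall fun x => norm_powFourierIntegrand_le (by linarith) hy x)

end PowFourierIntegrand

end Complex

lemma fourierT_psiW (s ξ : ℝ) : fourierT (psiW s) ξ = Complex.exp (-ξ) *
    ∫ x : ℝ, Complex.powFourierIntegrand (s + 1) ξ (x + (1 : ℝ) * Complex.I) := by
  rw [fourierT, ← integral_const_mul]
  congr 1 with x
  have hexp : -(Complex.I * (x + (1 : ℝ) * Complex.I) * ξ) = -(Complex.I * x * ξ) + ξ := by
    push_cast; ring_nf; rw [Complex.I_sq]; ring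
  rw [Complex.powFourierIntegrand, hexp, Complex.exp_add, psiW]
  have hcancel : Complex.exp (-ξ) * Complex.exp ξ = 1 := by
    rw [← Complex.exp_add, neg_add_cancel, Complex.exp_zero]
  push_cast
  rw [one_mul]
  linear_combination
    (-((x + Complex.I) ^ (-((s : ℂ) + 1)) * Complex.exp (-(Complex.I * x * ξ)))) * hcancel

theorem fourier_transform_psiW_neg (s : ℝ) (hs : 0 < s) :
    ∀ ξ : ℝ, ξ < 0 → fourierT (psiW s) ξ = 0 := by
  intro ξ hξ
  have hr : 1 < s + 1 := by linarith
  have hconst : ∀ᶠ y : ℝ in atTop,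
      ∫ x : ℝ, Complex.powFourierIntegrand (s + 1) ξ (x + y * Complex.I) =
        ∫ x : ℝ, Complex.powFourierIntegrand (s + 1) ξ (x + (1 : ℝ) * Complex.I) :=
    (eventually_gt_atTop (1 / 2)).mono fun y hy =>
      Complex.integral_powFourierIntegrand_eq hr hξ.le hy (by norm_num)
  have hzero := tendsto_nhds_unique (tendsto_const_nhds.congr' (hconst.mono fun _ h => h.symm))
    (Complex.tendsto_integral_powFourierIntegrand_atTop hr hξ)
  rw [fourierT_psiW, hzero, mul_zero]
end
end

section
/- Let ρ > 1 be a real number and let z ∈ ℂ with Im(z) ≠ 0. Then ∫_ℝ sin(t)/(t − z)^ρ dt = (π e^{iπ(ρ−1)/2}/Γ(ρ)) e^{iz} if Im(z) > 0, and ∫_ℝ sin(t)/(t − z)^ρ dt = (π e^{−iπ(ρ−1)/2}/Γ(ρ)) e^{−iz} if Im(z) < 0. -/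
open scoped Real MatrixGroups
open Filter MeasureTheory UpperHalfPlane

noncomputable section

/-! For `Im z > 0` and `ρ > 0`, the function `g(u) = 1_{u > 0} u^{ρ-1} e^{izu}` has Fourier
transform `Γ(ρ) i^{-ρ} (2πξ - z)^{-ρ}`. This is the Gamma integral
`∫₀^∞ u^{ρ-1} e^{-bu} du = Γ(ρ) b^{-ρ}`, extended from `b > 0` to `Re b > 0` by analytic
continuation: the left side is the Laplace transform of the measure `u^{ρ-1} du` on `(0, ∞)`.
For `ρ > 1` this Fourier transform is integrable, so Fourier inversion at `v = ±1` gives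
`∫ e^{ivt} (t - z)^{-ρ} dt = 2π i^ρ Γ(ρ)⁻¹ g(v)`; writing `sin t = (e^{it} - e^{-it}) / 2i`
and using `g(1) = e^{iz}`, `g(-1) = 0` gives the upper half-plane case. The lower half-plane
case follows by complex conjugation. -/

open Set Complex ProbabilityTheory
open scoped Topology ComplexConjugate FourierTransform

lemma I_cpow (c : ℂ) : Complex.I ^ c = cexp (π / 2 * Complex.I * c) := by
  rw [cpow_def_of_ne_zero I_ne_zero, log_I]

lemma I_mul_cpow {w : ℂ} (hw : w.im < 0) (c : ℂ) :
    (Complex.I * w) ^ c = Complex.I ^ c * w ^ c := by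
  have hw₀ : w ≠ 0 := fun h => by simp [h] at hw
  have harg : arg Complex.I + arg w ∈ Ioc (-π) π := by
    rw [arg_I]
    constructor <;> linarith [arg_neg_iff.2 hw, neg_pi_lt_arg w, Real.pi_pos]
  rw [cpow_def_of_ne_zero (mul_ne_zero I_ne_zero hw₀), cpow_def_of_ne_zero I_ne_zero,
    cpow_def_of_ne_zero hw₀, log_mul I_ne_zero hw₀ harg, ← exp_add, add_mul]

section GammaIntegral

lemma norm_cpow_mul_exp_neg_mul {s t : ℝ} (ht : 0 < t) (b : ℂ) :
    ‖(t : ℂ) ^ ((s : ℂ) - 1) * cexp (-(b * t))‖ = t ^ (s - 1) * Real.exp (-(b.re * t)) := by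
  rw [norm_mul, norm_cpow_eq_rpow_re_of_pos ht, norm_exp]
  simp

lemma continuousOn_cpow_mul_exp_neg_mul (s b : ℂ) :
    ContinuousOn (fun t : ℝ => (t : ℂ) ^ s * cexp (-(b * t))) (Ioi 0) :=
  .mul (fun t (ht : 0 < t) =>
    (continuousAt_ofReal_cpow_const t _ (Or.inr ht.ne')).continuousWithinAt) (by fun_prop)

lemma integrableOn_cpow_mul_exp_neg_mul_Ioi {s : ℝ} (hs : 0 < s) {b : ℂ} (hb : 0 < b.re) :
    IntegrableOn (fun t : ℝ => (t : ℂ) ^ ((s : ℂ) - 1) * cexp (-(b * t))) (Ioi 0) := by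
  refine Integrable.mono' (integrableOn_rpow_mul_exp_neg_mul_rpow (p := 1) (s := s - 1)
    (b := b.re) (by linarith) one_pos hb)
    ((continuousOn_cpow_mul_exp_neg_mul _ b).aestronglyMeasurable measurableSet_Ioi) ?_
  filter_upwards [ae_restrict_mem measurableSet_Ioi] with t (ht : 0 < t)
  rw [norm_cpow_mul_exp_neg_mul ht]
  simp

def powerMeasureIoi (s : ℝ) : Measure ℝ :=
  (volume.restrict (Ioi 0)).withDensity fun t => ENNReal.ofReal (t ^ (s - 1))

lemma integral_powerMeasureIoi (s : ℝ) (f : ℝ → ℂ) :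
    ∫ t, f t ∂powerMeasureIoi s = ∫ t : ℝ in Ioi 0, (t : ℂ) ^ ((s : ℂ) - 1) * f t := by
  rw [powerMeasureIoi, integral_withDensity_eq_integral_toReal_smul (by fun_prop)
    (ae_of_all _ fun _ => ENNReal.ofReal_lt_top)]
  refine setIntegral_congr_fun measurableSet_Ioi fun t (ht : 0 < t) => ?_
  rw [ENNReal.toReal_ofReal (by positivity), Complex.real_smul, ofReal_cpow ht.le]
  push_cast
  rfl

lemma complexMGF_powerMeasureIoi (s : ℝ) (b : ℂ) :
    complexMGF (fun t => -t) (powerMeasureIoi s) b =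
      ∫ t : ℝ in Ioi 0, (t : ℂ) ^ ((s : ℂ) - 1) * cexp (-(b * t)) := by
  simp only [complexMGF, integral_powerMeasureIoi, ofReal_neg, mul_neg]

lemma Ioi_subset_integrableExpSet_powerMeasureIoi {s : ℝ} (hs : 0 < s) :
    Ioi 0 ⊆ integrableExpSet (fun t => -t) (powerMeasureIoi s) := by
  intro b (hb : 0 < b)
  rw [integrableExpSet, mem_ofPred_eq, powerMeasureIoi,
    integrable_withDensity_iff_integrable_smul' (by fun_prop)
      (ae_of_all _ fun _ => ENNReal.ofReal_lt_top)]
  refine (integrableOn_rpow_mul_exp_neg_mul_rpow (p := 1) (s := s - 1) (b := b) (by linarith)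
    one_pos hb).congr_fun (fun t (ht : 0 < t) => ?_) measurableSet_Ioi
  simp [ENNReal.toReal_ofReal (Real.rpow_nonneg ht.le _)]

lemma frequently_nhdsNE_one_of_forall_pos {p : ℂ → Prop} (h : ∀ r : ℝ, 0 < r → p r) :
    ∃ᶠ z in 𝓝[≠] (1 : ℂ), p z := by
  have hofReal : Tendsto ((↑) : ℝ → ℂ) (𝓝[≠] 1) (𝓝[≠] 1) :=
    tendsto_nhdsWithin_iff.2 ⟨continuous_ofReal.continuousWithinAt.tendsto.trans (by simp),
      eventually_nhdsWithin_of_forall fun x hx => by simpa using hx⟩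
  exact hofReal.frequently
    ((eventually_nhdsWithin_of_eventually_nhds (eventually_gt_nhds one_pos)).frequently.mono h)

lemma integral_cpow_mul_exp_neg_mul_Ioi_of_re_pos {s : ℝ} (hs : 0 < s) {b : ℂ}
    (hb : 0 < b.re) :
    ∫ t : ℝ in Ioi 0, (t : ℂ) ^ ((s : ℂ) - 1) * cexp (-(b * t)) =
      Gamma s * b ^ (-(s : ℂ)) := by
  have hLaplace :
      AnalyticOnNhd ℂ (complexMGF (fun t => -t) (powerMeasureIoi s)) {z | 0 < z.re} :=
    analyticOnNhd_complexMGF.mono fun z (hz : 0 < z.re) =>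
      interior_mono (Ioi_subset_integrableExpSet_powerMeasureIoi hs) (by rwa [interior_Ioi])
  have hGamma : AnalyticOnNhd ℂ (fun b : ℂ => Gamma s * b ^ (-(s : ℂ))) {z | 0 < z.re} :=
    DifferentiableOn.analyticOnNhd (fun z (hz : 0 < z.re) =>
      ((differentiableAt_id.cpow_const (Or.inl hz)).const_mul _).differentiableWithinAt)
      (isOpen_lt continuous_const continuous_re)
  have hreal (r : ℝ) (hr : 0 < r) :
      complexMGF (fun t => -t) (powerMeasureIoi s) r = Gamma s * (r : ℂ) ^ (-(s : ℂ)) := by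
    rw [complexMGF_powerMeasureIoi, integral_cpow_mul_exp_neg_mul_Ioi (by simpa) hr, one_div,
      inv_cpow _ _ (by simp [arg_ofReal_of_nonneg hr.le, Real.pi_ne_zero.symm]), ← cpow_neg,
      mul_comm]
  rw [← complexMGF_powerMeasureIoi]
  exact hLaplace.eqOn_of_preconnected_of_frequently_eq hGamma
    (convex_halfSpace_re_gt 0).isPreconnected (by simp)
    (frequently_nhdsNE_one_of_forall_pos hreal) hb

end GammaIntegral

section Inversion

variable {ρ : ℝ} {z : ℂ}

lemma continuous_cpow_sub (hz : z.im ≠ 0) (c : ℂ) :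
    Continuous fun t : ℝ => ((t : ℂ) - z) ^ c :=
  (continuous_ofReal.sub continuous_const).cpow continuous_const fun t => Or.inr (by simpa)

lemma integrable_cpow_sub_neg (hρ : 1 < ρ) (hz : z.im ≠ 0) :
    Integrable fun t : ℝ => ((t : ℂ) - z) ^ (-(ρ : ℂ)) := by
  set C : ℝ := 1 + |z.im|⁻¹
  have hC : 0 < C := by positivity
  have hbracket (t : ℝ) : 1 + |t - z.re| ≤ C * ‖(t : ℂ) - z‖ := by
    have hre : |t - z.re| ≤ ‖(t : ℂ) - z‖ := by simpa using abs_re_le_norm ((t : ℂ) - z)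
    have him : |z.im| ≤ ‖(t : ℂ) - z‖ := by simpa using abs_im_le_norm ((t : ℂ) - z)
    have : 1 ≤ |z.im|⁻¹ * ‖(t : ℂ) - z‖ := by
      rwa [inv_mul_eq_div, one_le_div (abs_pos.2 hz)]
    linarith
  have hmaj : Integrable fun t : ℝ => C ^ ρ * (1 + ‖t - z.re‖) ^ (-ρ) :=
    ((integrable_one_add_norm (by simpa using hρ)).comp_sub_right z.re).const_mul _
  refine hmaj.mono' (continuous_cpow_sub hz _).aestronglyMeasurable (ae_of_all _ fun t => ?_)
  calc ‖((t : ℂ) - z) ^ (-(ρ : ℂ))‖ = ‖(t : ℂ) - z‖ ^ (-ρ) := by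
        rw [← ofReal_neg, norm_cpow_real]
    _ = C ^ ρ * (C * ‖(t : ℂ) - z‖) ^ (-ρ) := by
        rw [Real.mul_rpow hC.le (norm_nonneg _), ← mul_assoc, ← Real.rpow_add hC,
          add_neg_cancel, Real.rpow_zero, one_mul]
    _ ≤ C ^ ρ * (1 + |t - z.re|) ^ (-ρ) := by
        have hpos : 0 < 1 + |t - z.re| := by positivity
        gcongr _ * ?_
        exact Real.rpow_le_rpow_of_nonpos hpos (hbracket t) (by linarith)

lemma integrable_cexp_mul_cpow_sub (hρ : 1 < ρ) (hz : z.im ≠ 0) (v : ℝ) :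
    Integrable fun t : ℝ => cexp (Complex.I * v * t) * ((t : ℂ) - z) ^ (-(ρ : ℂ)) :=
  (integrable_cpow_sub_neg hρ hz).bdd_mul (c := 1) (by fun_prop)
    (ae_of_all _ fun t => by simp [norm_exp])

def halfLinePowExp (ρ : ℝ) (z : ℂ) : ℝ → ℂ :=
  (Ioi 0).indicator fun u => (u : ℂ) ^ ((ρ : ℂ) - 1) * cexp (Complex.I * z * u)

lemma integrable_halfLinePowExp (hρ : 0 < ρ) (hz : 0 < z.im) :
    Integrable (halfLinePowExp ρ z) :=
  (integrable_indicator_iff measurableSet_Ioi).2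
    (by simpa using integrableOn_cpow_mul_exp_neg_mul_Ioi hρ (b := -Complex.I * z) (by simpa))

lemma continuousAt_halfLinePowExp (ρ : ℝ) (z : ℂ) {v : ℝ} (hv : v ≠ 0) :
    ContinuousAt (halfLinePowExp ρ z) v :=
  ContinuousOn.continuousAt_indicator
    (by simpa using continuousOn_cpow_mul_exp_neg_mul _ (-Complex.I * z)) (by simpa using hv)

lemma fourier_halfLinePowExp (hρ : 0 < ρ) (hz : 0 < z.im) (ξ : ℝ) :
    𝓕 (halfLinePowExp ρ z) ξ =
      Gamma ρ * Complex.I ^ (-(ρ : ℂ)) * (((2 * π * ξ : ℝ) : ℂ) - z) ^ (-(ρ : ℂ)) := by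
  set w : ℂ := ((2 * π * ξ : ℝ) : ℂ) - z
  have hw : w.im < 0 := by simpa [w] using hz
  have hIw : 0 < (Complex.I * w).re := by simpa [w] using hz
  have hintegrand :
      (fun v : ℝ => cexp (↑(-2 * π * v * ξ) * Complex.I) • halfLinePowExp ρ z v) =
        (Ioi 0).indicator fun v : ℝ =>
          (v : ℂ) ^ ((ρ : ℂ) - 1) * cexp (-(Complex.I * w * v)) := by
    ext v
    by_cases hv : v ∈ Ioi (0 : ℝ)
    · simp only [halfLinePowExp, indicator_of_mem hv, smul_eq_mul]
      rw [mul_left_comm, ← exp_add]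
      congr 2
      simp only [w]
      push_cast
      ring
    · simp [halfLinePowExp, indicator_of_notMem hv]
  rw [Real.fourier_real_eq_integral_exp_smul, hintegrand, integral_indicator measurableSet_Ioi,
    integral_cpow_mul_exp_neg_mul_Ioi_of_re_pos hρ hIw, I_mul_cpow hw, mul_assoc]

lemma integrable_fourier_halfLinePowExp (hρ : 1 < ρ) (hz : 0 < z.im) :
    Integrable (𝓕 (halfLinePowExp ρ z)) := by
  have h := ((integrable_cpow_sub_neg hρ hz.ne').comp_mul_left'
    (by positivity : 2 * π ≠ 0)).const_mul (Gamma ρ * Complex.I ^ (-(ρ : ℂ)))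
  refine h.congr (ae_of_all _ fun ξ => ?_)
  simp only [fourier_halfLinePowExp (by linarith : 0 < ρ) hz ξ]

lemma integral_cexp_mul_cpow_sub (hρ : 1 < ρ) (hz : 0 < z.im) {v : ℝ} (hv : v ≠ 0) :
    ∫ t : ℝ, cexp (Complex.I * v * t) * ((t : ℂ) - z) ^ (-(ρ : ℂ)) =
      2 * π * Complex.I ^ (ρ : ℂ) / Gamma ρ * halfLinePowExp ρ z v := by
  set φ : ℝ → ℂ := fun t => cexp (Complex.I * v * t) * ((t : ℂ) - z) ^ (-(ρ : ℂ))
  have hinv := (integrable_halfLinePowExp (by linarith) hz).fourierInv_fourier_eq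
    (integrable_fourier_halfLinePowExp hρ hz) (continuousAt_halfLinePowExp ρ z hv)
  have hΓ : Gamma ρ ≠ 0 := Gamma_ne_zero_of_re_pos (by simp; linarith)
  have hIρ : Complex.I ^ (ρ : ℂ) ≠ 0 := by simp [I_cpow]
  have hscale : 𝓕⁻ (𝓕 (halfLinePowExp ρ z)) v =
      Gamma ρ * Complex.I ^ (-(ρ : ℂ)) * (2 * (π : ℂ))⁻¹ * ∫ t, φ t :=
    calc 𝓕⁻ (𝓕 (halfLinePowExp ρ z)) v
        = ∫ ξ : ℝ, Gamma ρ * Complex.I ^ (-(ρ : ℂ)) * φ (2 * π * ξ) := by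
          rw [Real.fourierInv_eq']
          refine integral_congr_ae (ae_of_all _ fun ξ => ?_)
          simp only [fourier_halfLinePowExp (by linarith : 0 < ρ) hz, φ, smul_eq_mul,
            RCLike.inner_apply, conj_trivial]
          push_cast
          ring_nf
      _ = _ := by
          rw [integral_const_mul, Measure.integral_comp_mul_left, abs_of_pos (by positivity),
            Complex.real_smul]
          push_cast
          ring
  rw [hinv, cpow_neg] at hscale
  rw [hscale]
  field_simp

lemma integral_sin_div_cpow_of_im_pos (hρ : 1 < ρ) (hz : 0 < z.im) :
    ∫ t : ℝ, (Real.sin t : ℂ) / ((t : ℂ) - z) ^ (ρ : ℂ) =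
      π * cexp (π * Complex.I * ((ρ : ℂ) - 1) / 2) / Gamma ρ * cexp (Complex.I * z) := by
  set e : ℝ → ℝ → ℂ := fun v t =>
    cexp (Complex.I * v * t) * ((t : ℂ) - z) ^ (-(ρ : ℂ))
  have hsin : (fun t : ℝ => (Real.sin t : ℂ) / ((t : ℂ) - z) ^ (ρ : ℂ)) =
      fun t => (2 * Complex.I)⁻¹ * (e 1 t - e (-1) t) := by
    ext t
    simp only [e, ofReal_sin, Complex.sin, cpow_neg, mul_inv, inv_I]
    push_cast
    ring_nf
  have hexp : cexp (π * Complex.I * ((ρ : ℂ) - 1) / 2) = Complex.I ^ (ρ : ℂ) / Complex.I :=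
    calc cexp (π * Complex.I * ((ρ : ℂ) - 1) / 2) = Complex.I ^ ((ρ : ℂ) - 1) := by
          rw [I_cpow]
          ring_nf
      _ = Complex.I ^ (ρ : ℂ) / Complex.I := by rw [cpow_sub _ _ I_ne_zero, cpow_one]
  have hg_one : halfLinePowExp ρ z 1 = cexp (Complex.I * z) := by simp [halfLinePowExp]
  have hg_neg_one : halfLinePowExp ρ z (-1) = 0 := by simp [halfLinePowExp]
  rw [hexp, hsin, integral_const_mul, integral_sub (integrable_cexp_mul_cpow_sub hρ hz.ne' 1)
      (integrable_cexp_mul_cpow_sub hρ hz.ne' (-1)),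
    integral_cexp_mul_cpow_sub hρ hz one_ne_zero, integral_cexp_mul_cpow_sub hρ hz (by norm_num),
    hg_one, hg_neg_one, mul_zero, sub_zero]
  field_simp

lemma conj_integral_sin_div_cpow (ρ : ℝ) (hz : z.im ≠ 0) :
    conj (∫ t : ℝ, (Real.sin t : ℂ) / ((t : ℂ) - z) ^ (ρ : ℂ)) =
      ∫ t : ℝ, (Real.sin t : ℂ) / ((t : ℂ) - conj z) ^ (ρ : ℂ) := by
  rw [← integral_conj]
  congr 1
  ext t
  have harg : ((t : ℂ) - z).arg ≠ π := fun h => hz (by simpa using (arg_eq_pi_iff.1 h).2)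
  rw [map_div₀, conj_ofReal, ← conj_ofReal ρ, ← conj_cpow _ _ harg]
  simp

end Inversion

theorem integral_sin_div_pow_general (ρ : ℝ) (hρ : 1 < ρ) (z : ℂ) :
    (0 < z.im → ∫ t : ℝ, (Real.sin t : ℂ) / ((t : ℂ) - z) ^ (ρ : ℂ) =
      (π : ℂ) * Complex.exp ((π : ℂ) * Complex.I * ((ρ : ℂ) - 1) / 2) / Complex.Gamma (ρ : ℂ) *
        Complex.exp (Complex.I * z)) ∧
    (z.im < 0 → ∫ t : ℝ, (Real.sin t : ℂ) / ((t : ℂ) - z) ^ (ρ : ℂ) =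
      (π : ℂ) * Complex.exp (-((π : ℂ) * Complex.I * ((ρ : ℂ) - 1) / 2)) / Complex.Gamma (ρ : ℂ) *
        Complex.exp (-(Complex.I * z))) := by
  refine ⟨integral_sin_div_cpow_of_im_pos hρ, fun hz => ?_⟩
  calc ∫ t : ℝ, (Real.sin t : ℂ) / ((t : ℂ) - z) ^ (ρ : ℂ)
      = conj (∫ t : ℝ, (Real.sin t : ℂ) / ((t : ℂ) - conj z) ^ (ρ : ℂ)) := by
        rw [conj_integral_sin_div_cpow ρ (by simpa using hz.ne), conj_conj]
    _ = _ := by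
        rw [integral_sin_div_cpow_of_im_pos hρ (by simpa using hz)]
        simp [← exp_conj, ← Gamma_conj, neg_div, map_ofNat]

theorem integral_sin_div_pow (ρ : ℝ) (hρ : 1 < ρ) (z : ℂ) (hz : z.im ≠ 0) :
    (0 < z.im → ∫ t : ℝ, (Real.sin t : ℂ) / ((t : ℂ) - z) ^ (ρ : ℂ) =
      (π : ℂ) * Complex.exp ((π : ℂ) * Complex.I * ((ρ : ℂ) - 1) / 2) / Complex.Gamma (ρ : ℂ) *
        Complex.exp (Complex.I * z)) ∧
    (z.im < 0 → ∫ t : ℝ, (Real.sin t : ℂ) / ((t : ℂ) - z) ^ (ρ : ℂ) =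
      (π : ℂ) * Complex.exp (-((π : ℂ) * Complex.I * ((ρ : ℂ) - 1) / 2)) / Complex.Gamma (ρ : ℂ) *
        Complex.exp (-(Complex.I * z))) :=
  integral_sin_div_pow_general ρ hρ z

end
end
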